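/- arXiv:2502.09664 — 2 statements merged into one kernel-verified Lean document; each statement's English description precedes it below -/
import Mathlib

section
/- Data-leakage robustness bound for the calibrated threshold: let L_1,…,L_n : ℝ → [0,B] be nondecreasing functions, let n = n_new + n_leak, and define t̂(S, m, β) = sup{ t : (1/(m+1)) ∑_{i∈S} L_i(t) + B/(m+1) ≤ β } for an index set S of size m and level β. Then for any values of the leaked functions L_{n_new+1},…,L_n, t̂({1,…,n}, n, α) ≤ t̂({1,…,n_new}, n_new, α·(n+1)/(n_new+1)). -/
/-- Data-leakage robustness bound for the calibrated threshold.
Let `L 0, …, L (n-1) : ℝ → [0,B]` be nondecreasing, `n = n_new + n_leak`, and define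
`t̂(S, m, β) = sup { t : (1/(m+1)) ∑_{i∈S} L_i(t) + B/(m+1) ≤ β }` (supremum in
`EReal`, empty sup being `⊥`).  Then, whatever the leaked functions
`L n_new, …, L (n-1)` are,
`t̂({0,…,n-1}, n, α) ≤ t̂({0,…,n_new-1}, n_new, α·(n+1)/(n_new+1))`. -/
theorem leaked_threshold_le (nnew nleak : ℕ) (B α : ℝ) (hB : 0 < B)
    (L : ℕ → ℝ → ℝ) (hmono : ∀ i, Monotone (L i))
    (hbdd : ∀ i t, L i t ∈ Set.Icc 0 B) :
    sSup ((fun t : ℝ => (t : EReal)) ''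
        {t : ℝ | (∑ i ∈ Finset.range (nnew + nleak), L i t) / ((nnew + nleak : ℕ) + 1)
          + B / ((nnew + nleak : ℕ) + 1) ≤ α}) ≤
      sSup ((fun t : ℝ => (t : EReal)) ''
        {t : ℝ | (∑ i ∈ Finset.range nnew, L i t) / (nnew + 1) + B / (nnew + 1)
          ≤ α * ((nnew + nleak : ℕ) + 1) / (nnew + 1)}) := by
  apply sSup_le_sSup
  apply Set.image_mono
  intro t ht
  simp only [Set.mem_setOf_eq] at ht ⊢
  have hn : (0:ℝ) < ((nnew + nleak : ℕ) : ℝ) + 1 := by positivity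
  have hm : (0:ℝ) < (nnew : ℝ) + 1 := by positivity
  have h1 : (∑ i ∈ Finset.range (nnew + nleak), L i t) + B ≤ α * (((nnew + nleak : ℕ) : ℝ) + 1) := by
    rw [← add_div, div_le_iff₀ hn] at ht
    linarith
  have h2 : (∑ i ∈ Finset.range nnew, L i t) ≤ ∑ i ∈ Finset.range (nnew + nleak), L i t := by
    apply Finset.sum_le_sum_of_subset_of_nonneg
    · exact Finset.range_subset_range.mpr (Nat.le_add_right _ _)
    · intro i _ _; exact (hbdd i t).1
  rw [← add_div, div_le_div_iff₀ hm hm, mul_comm (α * _)]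
  have : α * (((nnew + nleak : ℕ) : ℝ) + 1) / ((nnew:ℝ) + 1) * ((nnew:ℝ) + 1) = α * (((nnew + nleak : ℕ) : ℝ) + 1) := by
    field_simp
  nlinarith [hm.le]
end

section
/- Failure of the claimed guarantee in the baseline calibration: there exists a distribution over pairs (Ŷ, Y) of images with pixel values in [0,1], a deterministic zero uncertainty map σ ≡ 0, and parameters α > 0, δ ∈ (0,1), such that the mask M produced by the calibration rule M_{i,j} = min{ λ/(1 − σ_{i,j} + ε), 1 } with λ taken as the empirical (1−δ)-quantile of the per-sample maximal feasible λ_k values does NOT satisfy P[ E[ (1/(whd)) ∑_{i,j} M_{i,j} |Ŷ_{i,j} − Y_{i,j}| ] ≤ α ] ≥ 1 − δ. In particular, if with probability τ > 0 every calibration sample has zero error (forcing λ = 1 and M_{i,j} = 1/(1+ε)), then choosing δ = τ/2 and α ≤ ((1+ε)/2)·E[(1/(whd)) ∑_{i,j} |Ŷ_{i,j} − Y_{i,j}|] violates the guarantee. -/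
open MeasureTheory

/-- The continuous confidence mask of the baseline method at calibration parameter
`l`, for the deterministic zero uncertainty map `σ ≡ 0`:
`M_p = min ( l / (1 − σ_p + ε), 1 ) = min ( l / (1 − 0 + ε), 1 )`. -/
noncomputable def baselineMask (ε l : ℝ) : ℝ := min (l / (1 - 0 + ε)) 1

/-- The per-sample maximal feasible calibration parameter: the largest `l ∈ [0,1]`
whose mask satisfies the empirical weighted-error condition
`(1/N) ∑_p M^{(l)}_p · |e_p| ≤ α` on the given error vector `e`. -/
noncomputable def lamMax (N : ℕ) (ε α : ℝ) (e : Fin N → ℝ) : ℝ :=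
  sSup {l : ℝ | l ∈ Set.Icc (0 : ℝ) 1 ∧
    (∑ p, baselineMask ε l * |e p|) / N ≤ α}

open Classical in
/-- The empirical `(1−δ)`-quantile of the values `v 0, …, v (nc−1)`. -/
noncomputable def empQuantile {nc : ℕ} (δ : ℝ) (v : Fin nc → ℝ) : ℝ :=
  sInf {x : ℝ | 1 - δ ≤ ((Finset.univ.filter fun k => v k ≤ x).card : ℝ) / nc}

/-- The claimed RCPS-like guarantee of the baseline method: with probability at
least `1 − δ` over `nc` i.i.d. calibration samples (the product measure), the mask
calibrated at the empirical `(1−δ)`-quantile `λ̂` of the per-sample maximal feasible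
parameters has expected (over a fresh test sample) normalized weighted error at most
`α`. -/
noncomputable def baselineGuarantee {Ω : Type} [MeasurableSpace Ω] (Pm : Measure Ω)
    (N nc : ℕ) (Yh Y : Ω → Fin N → ℝ) (ε α δ : ℝ) : Prop :=
  ENNReal.ofReal (1 - δ) ≤
    (Measure.pi fun _ : Fin nc => Pm)
      {c | ∫ ω, (∑ p, baselineMask ε
              (empQuantile δ fun k => lamMax N ε α fun q => Yh (c k) q - Y (c k) q) *
            |Yh ω p - Y ω p|) / N ∂Pm ≤ α}

/-- The uniform probability measure on `Bool`. -/
noncomputable def PmB : Measure Bool :=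
  (2 : ENNReal)⁻¹ • Measure.dirac true + (2 : ENNReal)⁻¹ • Measure.dirac false

lemma PmB_apply (s : Set Bool) :
    PmB s = (2 : ENNReal)⁻¹ • s.indicator 1 true + (2 : ENNReal)⁻¹ • s.indicator 1 false := by
  simp [PmB, Measure.dirac_apply' _ (MeasurableSpace.measurableSet_top)]

instance : IsProbabilityMeasure PmB := by
  constructor
  rw [PmB_apply]
  simp [Set.indicator]
  rw [ENNReal.inv_two_add_inv_two]

lemma integral_PmB (f : Bool → ℝ) : ∫ ω, f ω ∂PmB = (f true + f false) / 2 := by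
  rw [integral_fintype (.of_finite), Fintype.sum_bool]
  have h1 : PmB {true} = 2⁻¹ := by
    rw [PmB_apply]; simp [Set.indicator]
  have h2 : PmB {false} = 2⁻¹ := by
    rw [PmB_apply]; simp [Set.indicator]
  rw [measureReal_def, measureReal_def, h1, h2]
  simp [ENNReal.toReal_inv]
  ring

lemma lamMax_zero : lamMax 1 1 (1/8) (fun _ : Fin 1 => (0:ℝ)) = 1 := by
  unfold lamMax
  have h : {l : ℝ | l ∈ Set.Icc (0 : ℝ) 1 ∧
      (∑ p : Fin 1, baselineMask 1 l * |(0:ℝ)|) / ((1:ℕ):ℝ) ≤ 1/8} = Set.Icc 0 1 := by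
    ext l; simp
  rw [h]
  exact csSup_Icc zero_le_one

lemma lamMax_one : lamMax 1 1 (1/8) (fun _ : Fin 1 => (1:ℝ)) = 1/4 := by
  unfold lamMax
  have h : {l : ℝ | l ∈ Set.Icc (0 : ℝ) 1 ∧
      (∑ p : Fin 1, baselineMask 1 l * |(1:ℝ)|) / ((1:ℕ):ℝ) ≤ 1/8} = Set.Icc 0 (1/4) := by
    ext l
    simp only [Set.mem_Icc, Set.mem_setOf_eq, Fin.sum_univ_one, abs_one, mul_one,
      Nat.cast_one, div_one, baselineMask]
    constructor
    · rintro ⟨⟨h0, h1⟩, hmin⟩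
      refine ⟨h0, ?_⟩
      have : l / (1 - 0 + 1) ≤ 1/8 := by
        rcases min_cases (l / (1 - 0 + 1)) 1 with ⟨he, _⟩ | ⟨he, hlt⟩
        · rw [he] at hmin; exact hmin
        · rw [he] at hmin; linarith
      linarith
    · rintro ⟨h0, h4⟩
      refine ⟨⟨h0, by linarith⟩, ?_⟩
      calc min (l / (1 - 0 + 1)) 1 ≤ l / (1 - 0 + 1) := min_le_left _ _
        _ ≤ 1/8 := by linarith
  rw [h]
  exact csSup_Icc (by norm_num)

open Classical in
lemma empQuantile_one (v : Fin 1 → ℝ) : empQuantile (1/4) v = v 0 := by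
  unfold empQuantile
  have h : {x : ℝ | 1 - 1/4 ≤
      ((Finset.univ.filter fun k : Fin 1 => v k ≤ x).card : ℝ) / ((1:ℕ):ℝ)} = Set.Ici (v 0) := by
    ext x
    by_cases hx : v 0 ≤ x
    · have : (Finset.univ.filter fun k : Fin 1 => v k ≤ x) = Finset.univ := by
        apply Finset.filter_true_of_mem
        intro k _
        rw [Fin.eq_zero k]; exact hx
      simp only [Set.mem_setOf_eq, this, Finset.card_univ, Fintype.card_fin,
        Nat.cast_one, Set.mem_Ici]
      norm_num
      exact hx
    · have : (Finset.univ.filter fun k : Fin 1 => v k ≤ x) = ∅ := by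
        apply Finset.filter_false_of_mem
        intro k _
        rw [Fin.eq_zero k]; exact hx
      simp only [Set.mem_setOf_eq, this, Finset.card_empty, Nat.cast_zero,
        Set.mem_Ici]
      norm_num
      exact lt_of_not_ge hx
  rw [h]
  exact csInf_Ici

/-- Failure of the claimed guarantee in the baseline calibration.
There exist a distribution over pairs `(Ŷ, Y)` of images with pixel values in
`[0,1]` (with `N = whd` pixel entries), the deterministic zero uncertainty map
(already built into `baselineMask`), a constant `ε > 0` and parameters `α > 0`,
`δ ∈ (0,1)`, such that the guarantee fails.  In particular the counterexample can be
taken so that: with probability `τ > 0` a sample has zero error, the population mean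
absolute error `m̄` is strictly positive, `δ = τ/2` and
`α ≤ ((1+ε)/2)·m̄`. -/
theorem baseline_guarantee_fails :
    ∃ (Ω : Type) (mΩ : MeasurableSpace Ω) (Pm : @Measure Ω mΩ),
      @IsProbabilityMeasure Ω mΩ Pm ∧
      ∃ (N nc : ℕ) (Yh Y : Ω → Fin N → ℝ) (ε α δ τ : ℝ),
        0 < N ∧ 0 < nc ∧ 0 < ε ∧ 0 < α ∧ 0 < δ ∧ δ < 1 ∧
        (∀ ω p, Yh ω p ∈ Set.Icc (0 : ℝ) 1 ∧ Y ω p ∈ Set.Icc (0 : ℝ) 1) ∧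
        0 < τ ∧ Pm {ω | ∀ p, Yh ω p = Y ω p} = ENNReal.ofReal τ ∧
        δ = τ / 2 ∧
        (0 < ∫ ω, (∑ p, |Yh ω p - Y ω p|) / N ∂Pm) ∧
        α ≤ (1 + ε) / 2 * ∫ ω, (∑ p, |Yh ω p - Y ω p|) / N ∂Pm ∧
        ¬ @baselineGuarantee Ω mΩ Pm N nc Yh Y ε α δ := by
  classical
  refine ⟨Bool, inferInstance, PmB, inferInstance, 1, 1,
    (fun ω _ => if ω then 0 else 1), (fun _ _ => 0), 1, 1/8, 1/4, 1/2,
    one_pos, one_pos, one_pos, by norm_num, by norm_num, by norm_num, ?_, by norm_num,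
    ?_, by norm_num, ?_, ?_, ?_⟩
  · intro ω p
    cases ω <;> simp
  · -- Pm {ω | ∀ p, Yh ω p = Y ω p} = ofReal (1/2)
    have hset : {ω : Bool | ∀ p : Fin 1, (if ω then (0:ℝ) else 1) = 0} = {true} := by
      ext ω; cases ω <;> simp
    rw [hset, PmB_apply]
    simp [Set.indicator]
  · -- positivity of mean error
    rw [show (fun ω : Bool => (∑ p : Fin 1, |(if ω then (0:ℝ) else 1) - 0|) / ((1:ℕ):ℝ)) =
      (fun ω : Bool => if ω then 0 else 1) from by funext ω; cases ω <;> simp]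
    rw [integral_PmB]
    norm_num
  · rw [show (fun ω : Bool => (∑ p : Fin 1, |(if ω then (0:ℝ) else 1) - 0|) / ((1:ℕ):ℝ)) =
      (fun ω : Bool => if ω then 0 else 1) from by funext ω; cases ω <;> simp]
    rw [integral_PmB]
    norm_num
  · -- failure of the guarantee
    unfold baselineGuarantee
    intro hguar
    set S := {c : Fin 1 → Bool | ∫ ω, (∑ p : Fin 1, baselineMask 1
        (empQuantile (1/4) fun k => lamMax 1 1 (1/8)
          fun q => (if c k then (0:ℝ) else 1) - 0) *
        |(if ω then (0:ℝ) else 1) - 0|) / ((1:ℕ):ℝ) ∂PmB ≤ 1/8} with hS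
    have hsub : S ⊆ {c : Fin 1 → Bool | c 0 = false} := by
      intro c hc
      by_contra hcf
      have hct : c 0 = true := by
        cases h : c 0
        · exact absurd h hcf
        · rfl
      have hlam : (empQuantile (1/4) fun k : Fin 1 => lamMax 1 1 (1/8)
          fun q => (if c k then (0:ℝ) else 1) - 0) = 1 := by
        rw [empQuantile_one, hct]
        simp only [if_true]
        rw [show (fun q : Fin 1 => (0:ℝ) - 0) = (fun _ : Fin 1 => (0:ℝ)) from by
          funext q; ring]
        exact lamMax_zero
      have hmask : baselineMask 1 1 = 1/2 := by
        unfold baselineMask; norm_num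
      have : (∫ ω, (∑ p : Fin 1, baselineMask 1
          (empQuantile (1/4) fun k => lamMax 1 1 (1/8)
            fun q => (if c k then (0:ℝ) else 1) - 0) *
          |(if ω then (0:ℝ) else 1) - 0|) / ((1:ℕ):ℝ) ∂PmB) = 1/4 := by
        rw [hlam, hmask]
        rw [show (fun ω : Bool => (∑ p : Fin 1, (1/2 : ℝ) *
            |(if ω then (0:ℝ) else 1) - 0|) / ((1:ℕ):ℝ)) =
          (fun ω : Bool => if ω then 0 else 1/2) from by funext ω; cases ω <;> simp]
        rw [integral_PmB]
        norm_num
      have hcS : (1/4 : ℝ) ≤ 1/8 := by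
        rw [← this]; exact hc
      norm_num at hcS
    have hmeas : (Measure.pi fun _ : Fin 1 => PmB) {c : Fin 1 → Bool | c 0 = false}
        = 2⁻¹ := by
      have heq : {c : Fin 1 → Bool | c 0 = false} = Set.pi Set.univ (fun _ : Fin 1 => {false}) := by
        ext c
        simp [Set.mem_pi, Fin.forall_fin_one]
      rw [heq, Measure.pi_pi]
      simp
      rw [PmB_apply]
      simp [Set.indicator]
    have hle : (Measure.pi fun _ : Fin 1 => PmB) S ≤ 2⁻¹ := by
      rw [← hmeas]
      exact measure_mono hsub
    have : ENNReal.ofReal (1 - 1/4) ≤ 2⁻¹ := le_trans hguar hle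
    rw [show (1 - 1/4 : ℝ) = 3/4 from by norm_num] at this
    have h34 : (2 : ENNReal)⁻¹ < ENNReal.ofReal (3/4) := by
      rw [ENNReal.lt_ofReal_iff_toReal_lt (by simp)]
      simp [ENNReal.toReal_inv]
      norm_num
    exact absurd this (not_le.mpr h34)
end
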